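/- arXiv:2005.01397 — 5 statements merged into one kernel-verified Lean document; each statement's English description precedes it below -/
import Mathlib

section
/- Let k be a field and let u ∈ k((t)) be a nonzero Laurent series, written u = t^m · v with m ∈ ℤ and v a unit of the power series ring k[[t]] (i.e., v has nonzero constant term). Then the residue (coefficient of t^{-1}) of the logarithmic derivative u'/u equals m·1_k. -/
/-! The derivative satisfies `(t^m f)' = t^m (f' + m t⁻¹ f)`, so `u'/u = m t⁻¹ + v'/v`.
Since `v` is a unit of `k[[t]]`, `v'/v = v' v⁻¹` is again a power series and has no `t⁻¹`
term. -/

/-- Formal derivative of a Laurent series: `(lderiv f).coeff n = (n+1) • f.coeff (n+1)`. -/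
noncomputable def LaurentSeries.lderiv {K : Type*} [Field K] (f : LaurentSeries K) :
    LaurentSeries K where
  coeff n := (n + 1 : ℤ) • f.coeff (n + 1)
  isPWO_support' := by
    have h : (Function.support fun n : ℤ => (n + 1 : ℤ) • f.coeff (n + 1)) ⊆
        (fun n : ℤ => n - 1) '' f.support := by
      intro n hn
      refine ⟨n + 1, ?_, by ring⟩
      intro h0
      simp [h0] at hn
    exact (f.isPWO_support.image_of_monotone (fun a b hab => by omega)).mono h

namespace LaurentSeries

open HahnSeries PowerSeries

variable {K : Type*} [Field K]

@[simp]
theorem coeff_lderiv (f : LaurentSeries K) (n : ℤ) :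
    (lderiv f).coeff n = (n + 1 : ℤ) • f.coeff (n + 1) :=
  rfl

theorem lderiv_ofPowerSeries (f : PowerSeries K) :
    lderiv (ofPowerSeries ℤ K f) = ofPowerSeries ℤ K (d⁄dX K f) := by
  ext n
  rw [coeff_lderiv, coeff_coe, coeff_coe, coeff_derivative]
  rcases lt_trichotomy n (-1) with hn | rfl | hn
  · rw [if_pos (by omega), if_pos (by omega), smul_zero]
  · simp
  · lift n to ℕ using (by omega)
    rw [if_neg (by omega), if_neg (by omega), zsmul_eq_mul, mul_comm]
    norm_cast

theorem lderiv_single_mul (m : ℤ) (f : LaurentSeries K) :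
    lderiv (single m 1 * f) = single m 1 * (lderiv f + single (-1) (m : K) * f) := by
  ext n
  simp only [coeff_lderiv, coeff_single_mul, HahnSeries.coeff_add, one_mul, zsmul_eq_mul]
  rw [show n + 1 - m = n - m - -1 by ring, show n - m + 1 = n - m - -1 by ring]
  push_cast
  ring

theorem coe_inv_of_constantCoeff_ne_zero {v : PowerSeries K} (hv : constantCoeff v ≠ 0) :
    (ofPowerSeries ℤ K v)⁻¹ = ofPowerSeries ℤ K v⁻¹ :=
  inv_eq_of_mul_eq_one_right <| by rw [← map_mul, PowerSeries.mul_inv_cancel v hv, map_one]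

theorem coeff_neg_one_lderiv_div_coe {v : PowerSeries K} (hv : constantCoeff v ≠ 0) :
    (lderiv (ofPowerSeries ℤ K v) / ofPowerSeries ℤ K v).coeff (-1) = 0 := by
  rw [div_eq_mul_inv, coe_inv_of_constantCoeff_ne_zero hv, lderiv_ofPowerSeries, ← map_mul,
    coeff_coe, if_pos (by omega)]

end LaurentSeries

theorem residue_logDeriv_eq_order_general
    {K : Type*} [Field K] (u : LaurentSeries K)
    (m : ℤ) (v : PowerSeries K) (hv : PowerSeries.constantCoeff v ≠ 0)
    (hu : u = HahnSeries.single m 1 * (HahnSeries.ofPowerSeries ℤ K v)) :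
    (u.lderiv / u).coeff (-1) = (m : K) := by
  set V := HahnSeries.ofPowerSeries ℤ K v
  have hV : V ≠ 0 := fun h ↦
    hv (by simpa [V, PowerSeries.coeff_coe] using congrArg (·.coeff 0) h)
  have hlog : u.lderiv / u = LaurentSeries.lderiv V / V + HahnSeries.single (-1) (m : K) := by
    rw [hu, LaurentSeries.lderiv_single_mul,
      mul_div_mul_left _ _ (HahnSeries.single_ne_zero (one_ne_zero' K)), add_div,
      mul_div_cancel_right₀ _ hV]
  rw [hlog, HahnSeries.coeff_add, LaurentSeries.coeff_neg_one_lderiv_div_coe hv,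
    HahnSeries.coeff_single_same, zero_add]

/-- if `u = t^m · v` is a nonzero Laurent series with `v` a unit power
series, then the residue of the logarithmic derivative `u'/u` is `m · 1_k`. -/
theorem residue_logDeriv_eq_order
    {K : Type*} [Field K] (u : LaurentSeries K) (hu0 : u ≠ 0)
    (m : ℤ) (v : PowerSeries K) (hv : PowerSeries.constantCoeff v ≠ 0)
    (hu : u = HahnSeries.single m 1 * (HahnSeries.ofPowerSeries ℤ K v)) :
    (u.lderiv / u).coeff (-1) = (m : K) :=
  residue_logDeriv_eq_order_general u m v hv hu
end

section
/- Let k be a field of characteristic zero, let f ∈ k((t)) be a formal Laurent series, and let s ∈ k[[t]] be a power series of order exactly 1 (s(0) = 0 and s'(0) ≠ 0). Then the residue of the Laurent series f(s(t)) · s'(t) (the substitution of s into f, multiplied by the derivative of s) equals the residue of f. In other words, the formal residue is invariant under change of coordinate. -/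
/-!
For `n ≠ -1`, `s ^ n * s'` is the derivative of `s ^ (n + 1) / (n + 1)` and so has no residue,
while `s⁻¹ * s' = t⁻¹ + (a power series)`. Concretely, write `s = t * u` with `u` a unit and
`n = -(k + 1)`: the residue of `s ^ n * s'` is the `t ^ k`-coefficient of `u⁻¹ ^ (k + 1) * s'`, and
`k * u⁻¹ ^ (k + 1) * s' = k * u⁻¹ ^ k - t * (u⁻¹ ^ k)'` has vanishing `t ^ k`-coefficient because
`t * d/dt` multiplies it by `k`.
-/

namespace PowerSeries

theorem coeff_X_mul_derivative {R : Type*} [CommSemiring R] (g : R⟦X⟧) (n : ℕ) :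
    coeff n (X * d⁄dX R g) = n * coeff n g := by
  cases n with
  | zero => simp
  | succ k => rw [coeff_succ_X_mul, coeff_derivative, mul_comm, Nat.cast_succ]

theorem derivative_X_mul {R : Type*} [CommSemiring R] (g : R⟦X⟧) :
    d⁄dX R (X * g) = g + X * d⁄dX R g := by
  rw [Derivation.leibniz, derivative_X, smul_eq_mul, smul_eq_mul, mul_one, add_comm]

variable {K : Type*} [Field K] {u : K⟦X⟧}

theorem constantCoeff_inv_mul_derivative_X_mul (hu : constantCoeff u ≠ 0) :
    constantCoeff (u⁻¹ * d⁄dX K (X * u)) = 1 := by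
  rw [derivative_X_mul, mul_add, PowerSeries.inv_mul_cancel u hu]
  simp

theorem coeff_succ_inv_pow_mul_derivative_X_mul [CharZero K] (hu : constantCoeff u ≠ 0) (k : ℕ) :
    coeff (k + 1) (u⁻¹ ^ (k + 2) * d⁄dX K (X * u)) = 0 := by
  have euler : ((k + 1 : ℕ) : K⟦X⟧) * (u⁻¹ ^ (k + 2) * d⁄dX K (X * u)) =
      ((k + 1 : ℕ) : K⟦X⟧) * u⁻¹ ^ (k + 1) - X * d⁄dX K (u⁻¹ ^ (k + 1)) := by
    have hw : u⁻¹ ^ (k + 2) * u = u⁻¹ ^ (k + 1) := by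
      rw [pow_succ _ (k + 1), mul_assoc, PowerSeries.inv_mul_cancel u hu, mul_one]
    rw [derivative_pow, derivative_inv', derivative_X_mul, Nat.add_sub_cancel, mul_add, hw]
    ring
  have h := congrArg (coeff (k + 1)) euler
  rw [map_sub, coeff_X_mul_derivative, ← map_natCast (C (R := K)),
    coeff_C_mul, coeff_C_mul, sub_self, mul_eq_zero] at h
  exact h.resolve_left (Nat.cast_ne_zero.2 k.succ_ne_zero)

end PowerSeries

namespace HahnSeries

open PowerSeries

theorem coeff_single_neg_mul_ofPowerSeries {R : Type*} [Semiring R] (r : R) (g : R⟦X⟧) (k : ℕ) :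
    (single (-(k + 1 : ℤ)) r * ofPowerSeries ℤ R g).coeff (-1) = r * PowerSeries.coeff k g := by
  rw [show (-1 : ℤ) = k + -(k + 1 : ℤ) by ring, coeff_single_mul_add, ofPowerSeries_apply_coeff]

theorem ofPowerSeries_X_mul_zpow_neg {K : Type*} [Field K] {u : K⟦X⟧}
    (hu : constantCoeff u ≠ 0) (m : ℕ) :
    ofPowerSeries ℤ K (X * u) ^ (-(m : ℤ)) = single (-(m : ℤ)) 1 * ofPowerSeries ℤ K (u⁻¹ ^ m) := by
  rw [zpow_neg, zpow_natCast]
  refine inv_eq_of_mul_eq_one_right ?_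
  calc ofPowerSeries ℤ K (X * u) ^ m * (single (-(m : ℤ)) 1 * ofPowerSeries ℤ K (u⁻¹ ^ m))
      = (single (m : ℤ) 1 * single (-(m : ℤ)) 1) * ofPowerSeries ℤ K ((u * u⁻¹) ^ m) := by
        rw [← map_pow, mul_pow, map_mul, mul_pow, map_mul, ofPowerSeries_X_pow]
        ring
    _ = 1 := by
        rw [single_mul_single, add_neg_cancel, PowerSeries.mul_inv_cancel u hu, one_pow, map_one,
          mul_one, mul_one, single_zero_one]

end HahnSeries

open PowerSeries HahnSeries in
theorem LaurentSeries.coeff_neg_one_zpow_mul_derivative {K : Type*} [Field K] [CharZero K]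
    {s : K⟦X⟧} (hs0 : constantCoeff s = 0) (hs1 : coeff 1 s ≠ 0) (n : ℤ) :
    (ofPowerSeries ℤ K s ^ n * ofPowerSeries ℤ K (d⁄dX K s)).coeff (-1) =
      if n = -1 then 1 else 0 := by
  obtain ⟨u, rfl⟩ := X_dvd_iff.2 hs0
  have hu : constantCoeff u ≠ 0 := by rwa [coeff_succ_X_mul, coeff_zero_eq_constantCoeff] at hs1
  cases n with
  | ofNat m =>
    rw [Int.ofNat_eq_natCast, zpow_natCast, ← map_pow, ← map_mul, coeff_coe, if_pos (by norm_num),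
      if_neg (by omega)]
  | negSucc k =>
    rw [Int.negSucc_eq, ← Nat.cast_succ, ofPowerSeries_X_mul_zpow_neg hu, mul_assoc, ← map_mul,
      Nat.cast_succ, coeff_single_neg_mul_ofPowerSeries, one_mul]
    cases k with
    | zero => simpa using constantCoeff_inv_mul_derivative_X_mul hu
    | succ k => rw [if_neg (by omega), coeff_succ_inv_pow_mul_derivative_X_mul hu]

/-- invariance of the formal residue under change of coordinate.
If `f` is a Laurent series (with coefficients vanishing below `N`), `s` is a power
series of order exactly `1`, and `F = f(s(t))·s'(t)` is the substitution of `s` into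
`f` multiplied by the derivative of `s` (expressed coefficientwise: the coefficient of
`t^m` in `F` is the (finite) sum over `n` of `f_n` times the `t^m`-coefficient of
`s^n·s'`), then `F` and `f` have the same residue. -/
theorem residue_invariant_under_coordinate_change
    {K : Type*} [Field K] [CharZero K]
    (f F : LaurentSeries K) (N : ℤ) (hN : ∀ i < N, f.coeff i = 0)
    (s : PowerSeries K)
    (hs0 : PowerSeries.constantCoeff s = 0)
    (hs1 : PowerSeries.coeff 1 s ≠ 0)
    (hF : ∀ m : ℤ, F.coeff m =
      ∑ n ∈ Finset.Icc N m, f.coeff n *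
        (((HahnSeries.ofPowerSeries ℤ K s) ^ n *
          HahnSeries.ofPowerSeries ℤ K s.derivativeFun).coeff m)) :
    F.coeff (-1) = f.coeff (-1) := by
  have hs' : s.derivativeFun = PowerSeries.derivative K s := rfl
  simp_rw [hF, hs', LaurentSeries.coeff_neg_one_zpow_mul_derivative hs0 hs1, mul_ite, mul_one,
    mul_zero]
  rw [Finset.sum_ite_eq']
  split_ifs with h
  · rfl
  · exact (hN _ (by simpa using h)).symm
end

section
/- Let k be a field of characteristic zero, let n be a nonzero integer, and let f ∈ k((t)) be a Laurent series of the form f = Σ_{i ≥ n} a_i t^i with a_n ≠ 0. Then there exist a formal coordinate s ∈ k[[t]] of order exactly 1 and constants c ∈ k^× and r ∈ k, with r equal to the residue a_0 of f·dt/t, such that f(t)/t = (c·s(t)^n + r)·s'(t)/s(t) in k((t)). In other words, every formal differential ω = f dt/t with leading order n ≠ 0 can be written in the binomial normal form (c s^n + r) ds/s in a suitable formal coordinate s. -/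
open PowerSeries
namespace GFC
variable {k : Type*} [Field k] [CharZero k]

lemma coeff_mul_of_dvd (A ε : PowerSeries k) (j : ℕ) (h : (X : PowerSeries k)^j ∣ ε) :
    coeff j (A * ε) = constantCoeff A * coeff j ε := by
  obtain ⟨η, rfl⟩ := h
  have h1 : A * ((X : PowerSeries k)^j * η) = (X : PowerSeries k)^j * (A * η) := by ring
  rw [h1]
  have h2 := coeff_X_pow_mul (A * η) j 0
  have h3 := coeff_X_pow_mul η j 0
  simp only [zero_add] at h2 h3
  rw [h2, h3, coeff_zero_eq_constantCoeff_apply, coeff_zero_eq_constantCoeff_apply, map_mul]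

lemma coeff_X_mul_deriv (ε : PowerSeries k) (j : ℕ) :
    coeff j (X * ε.derivativeFun) = (j : k) * coeff j ε := by
  cases j with
  | zero => simp
  | succ i =>
      rw [coeff_succ_X_mul]
      erw [coeff_derivative]
      push_cast
      ring

lemma dvd_X_mul_deriv (ε : PowerSeries k) (j : ℕ) (h : (X : PowerSeries k)^j ∣ ε) :
    (X : PowerSeries k)^j ∣ X * ε.derivativeFun := by
  rw [X_pow_dvd_iff] at h ⊢
  intro i hi
  rw [coeff_X_mul_deriv, h i hi, mul_zero]

lemma deriv_sub (a b : PowerSeries k) :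
    derivativeFun (a - b) = derivativeFun a - derivativeFun b := by
  ext j
  exact congrArg (coeff j) (map_sub (derivative k) a b)

lemma deriv_pow_succ (a : PowerSeries k) (K : ℕ) :
    derivativeFun (a ^ (K+1)) = C ((K:k)+1) * (a ^ K * derivativeFun a) := by
  induction K with
  | zero => simp
  | succ K ih =>
      rw [pow_succ, derivativeFun_mul, ih]
      rw [smul_eq_mul, smul_eq_mul]
      push_cast
      have hC : C ((K:k) + 1 + 1) = C ((K:k)+1) + 1 := by rw [map_add, map_one]
      rw [hC, pow_succ]
      ring

lemma u_mul_deriv_pow (u : PowerSeries k) (m : ℕ) :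
    u * derivativeFun (u^m) = C (m:k) * (u^m * derivativeFun u) := by
  cases m with
  | zero => simp [derivativeFun_one]
  | succ K =>
      rw [deriv_pow_succ]
      push_cast
      rw [pow_succ]
      ring

lemma coeff_res_zero (u : PowerSeries k) (hu : constantCoeff u = 1) (m : ℕ) (hm : 0 < m) :
    coeff m ((u + X * derivativeFun u) * (u ^ (m+1))⁻¹) = 0 := by
  have hu0 : constantCoeff u ≠ 0 := by rw [hu]; exact one_ne_zero
  have hum : constantCoeff (u ^ m) ≠ 0 := by rw [map_pow, hu, one_pow]; exact one_ne_zero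
  have hum1 : constantCoeff (u ^ (m+1)) ≠ 0 := by rw [map_pow, hu, one_pow]; exact one_ne_zero
  have hun1 : (u : PowerSeries k) ^ (m+1) ≠ 0 := fun h => hum1 (by rw [h, map_zero])
  set p : PowerSeries k := (u ^ m)⁻¹ with hp
  have h1 : u ^ m * p = 1 := PowerSeries.mul_inv_cancel _ hum
  have h2 : derivativeFun (u^m) * p + u^m * derivativeFun p = 0 := by
    have h := congrArg derivativeFun h1
    rw [derivativeFun_mul, derivativeFun_one, smul_eq_mul, smul_eq_mul] at h
    linear_combination h
  have hq1 : u ^ (m+1) * (u ^ (m+1))⁻¹ = 1 := PowerSeries.mul_inv_cancel _ hum1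
  have hup := u_mul_deriv_pow u m
  have hkey : (C (m:k)) * ((u + X * derivativeFun u) * (u^(m+1))⁻¹) =
      C (m:k) * p - X * derivativeFun p := by
    apply mul_right_cancel₀ hun1
    linear_combination (C (m:k) * (u + X * u.derivativeFun)) * hq1 + (X * u) * h2
      + (-(X * p)) * hup + (-(C (m:k)) * u - (C (m:k)) * (X * u.derivativeFun)) * h1
  have hm0 : (m : k) ≠ 0 := Nat.cast_ne_zero.mpr (Nat.pos_iff_ne_zero.mp hm)
  have hcoeff := congrArg (coeff m) hkey
  rw [coeff_C_mul, map_sub, coeff_C_mul, coeff_X_mul_deriv] at hcoeff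
  have : (m:k) * coeff m ((u + X * derivativeFun u) * (u ^ (m+1))⁻¹) = 0 := by
    rw [hcoeff]; ring
  exact (mul_eq_zero.mp this).resolve_left hm0

lemma resonant_coeff_zero (g u : PowerSeries k) (c r : k) (m : ℕ) (hm : 0 < m)
    (hu : constantCoeff u = 1) (hgm : coeff m g = r)
    (hdvd : (X:PowerSeries k)^m ∣
      (g * u^(m+1) - (C c + C r * X^m * u^m) * (u + X * derivativeFun u))) :
    coeff m (g * u^(m+1) - (C c + C r * X^m * u^m) * (u + X * derivativeFun u)) = 0 := by
  have hu0 : constantCoeff u ≠ 0 := by rw [hu]; exact one_ne_zero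
  have hum1 : constantCoeff (u ^ (m+1)) ≠ 0 := by rw [map_pow, hu, one_pow]; exact one_ne_zero
  have hq1 : u ^ (m+1) * (u ^ (m+1))⁻¹ = 1 := PowerSeries.mul_inv_cancel _ hum1
  have hui : u * u⁻¹ = 1 := PowerSeries.mul_inv_cancel _ hu0
  have hune : u ≠ 0 := fun h => hu0 (by rw [h, map_zero])
  have humw : u^m * (u^(m+1))⁻¹ = u⁻¹ := by
    apply mul_right_cancel₀ hune
    calc u^m * (u^(m+1))⁻¹ * u = u^(m+1) * (u^(m+1))⁻¹ := by ring
      _ = 1 := hq1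
      _ = u⁻¹ * u := by rw [mul_comm]; exact hui.symm
  set Dv := g * u^(m+1) - (C c + C r * X^m * u^m) * (u + X * derivativeFun u) with hDv
  set e := Dv * (u^(m+1))⁻¹ with he
  have hdvd_e : (X:PowerSeries k)^m ∣ e := hdvd.mul_right _
  have hDe : Dv = u^(m+1) * e := by
    rw [he]
    calc Dv = Dv * (u^(m+1) * (u^(m+1))⁻¹) := by rw [hq1, mul_one]
      _ = u^(m+1) * (Dv * (u^(m+1))⁻¹) := by ring
  have hcme : coeff m e = 0 := by
    have he2 : e = g * (u^(m+1) * (u^(m+1))⁻¹)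
        - C c * ((u + X * derivativeFun u) * (u^(m+1))⁻¹)
        - C r * (X^m * ((u + X * derivativeFun u) * (u^m * (u^(m+1))⁻¹))) := by
      rw [he, hDv]; ring
    have hxm : coeff m ((X:PowerSeries k)^m * ((u + X * derivativeFun u) * u⁻¹)) = 1 := by
      have h0 := coeff_X_pow_mul ((u + X * derivativeFun u) * u⁻¹) m 0
      simp only [zero_add] at h0
      rw [h0, coeff_zero_eq_constantCoeff_apply, map_mul, map_add, map_mul, constantCoeff_X,
        zero_mul, add_zero, hu, PowerSeries.constantCoeff_inv, hu]
      norm_num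
    rw [he2, hq1, mul_one, humw, map_sub, map_sub, coeff_C_mul, coeff_C_mul, hgm, hxm,
      coeff_res_zero u hu m hm]
    ring
  rw [hDe, coeff_mul_of_dvd _ _ _ hdvd_e, hcme, mul_zero]

lemma hstep_neg (g : PowerSeries k) (c r : k) (hg0 : constantCoeff g = c) (m : ℕ) (hm : 0 < m)
    (j : ℕ) (a b : PowerSeries k)
    (ha : constantCoeff a = 1) (hb : constantCoeff b = 1)
    (h : ∀ i, i < j → coeff i a = coeff i b) :
    coeff j (g * a^(m+1) - (C c + C r * X^m * a^m) * (a + X * derivativeFun a))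
      - (c * ((m:k) - (j:k))) * coeff j a =
    coeff j (g * b^(m+1) - (C c + C r * X^m * b^m) * (b + X * derivativeFun b))
      - (c * ((m:k) - (j:k))) * coeff j b := by
  have hdvd : (X:PowerSeries k)^j ∣ (a - b) := by
    rw [X_pow_dvd_iff]; intro i hi; rw [map_sub, h i hi, sub_self]
  set G := ∑ i ∈ Finset.range (m+1), a^i * b^(m+1-1-i) with hG
  have hgeom : a^(m+1) - b^(m+1) = G * (a - b) := (geom_sum₂_mul a b (m+1)).symm
  have hG0 : constantCoeff G = (m:k)+1 := by
    rw [hG, map_sum]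
    have : ∀ i ∈ Finset.range (m+1), constantCoeff (a^i * b^(m+1-1-i)) = 1 := by
      intro i _; rw [map_mul, map_pow, map_pow, ha, hb, one_pow, one_pow, one_mul]
    rw [Finset.sum_congr rfl this, Finset.sum_const, Finset.card_range, nsmul_eq_mul, mul_one]
    push_cast; ring
  have hxi : (X:PowerSeries k)^j ∣ a^(m+1) - b^(m+1) := by rw [hgeom]; exact hdvd.mul_left G
  have hXxi := dvd_X_mul_deriv _ j hxi
  have hmp1 : ((m:k)+1) ≠ 0 := by
    have := Nat.cast_add_one_ne_zero (R := k) m; push_cast at this ⊢; exact this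
  have hC1 : C (((m:k)+1)⁻¹) * C ((m:k)+1) = 1 := by
    rw [← map_mul, inv_mul_cancel₀ hmp1, map_one]
  set δ := a^m * (a + X * derivativeFun a) - b^m * (b + X * derivativeFun b) with hδ
  have hδ2 : δ = (a^(m+1) - b^(m+1))
      + C (((m:k)+1)⁻¹) * (X * derivativeFun (a^(m+1) - b^(m+1))) := by
    rw [hδ, deriv_sub, deriv_pow_succ a m, deriv_pow_succ b m]
    linear_combination (-(X * (a^m * derivativeFun a - b^m * derivativeFun b))) * hC1
  have hdvdδ : (X:PowerSeries k)^j ∣ δ := by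
    rw [hδ2]; exact dvd_add hxi (Dvd.dvd.mul_left hXxi _)
  have hXmδ : coeff j ((X:PowerSeries k)^m * δ) = 0 := by
    obtain ⟨d0, hd0⟩ := hdvdδ
    rw [hd0]
    have e : (X:PowerSeries k)^m * ((X:PowerSeries k)^j * d0) = X^(m+j) * d0 := by
      rw [pow_add]; ring
    rw [e]
    exact X_pow_dvd_iff.mp ⟨d0, rfl⟩ j (by omega)
  have hsplit : (g * a^(m+1) - (C c + C r * X^m * a^m) * (a + X * derivativeFun a))
      - (g * b^(m+1) - (C c + C r * X^m * b^m) * (b + X * derivativeFun b))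
      = g * (G * (a-b)) - C c * (a-b) - C c * (X * derivativeFun (a-b))
        - C r * (X^m * δ) := by
    rw [deriv_sub, hδ]
    linear_combination g * hgeom
  have hc1 : coeff j (g * (G * (a-b))) = c * ((m:k)+1) * (coeff j a - coeff j b) := by
    rw [← mul_assoc, coeff_mul_of_dvd _ _ _ hdvd, map_mul, hg0, hG0, map_sub]
  have hXd : coeff j (X * derivativeFun (a-b)) = (j:k) * (coeff j a - coeff j b) := by
    rw [coeff_X_mul_deriv, map_sub]
  have hfin := congrArg (coeff j) hsplit
  simp only [map_sub, coeff_C_mul] at hfin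
  rw [hc1, hXd, hXmδ] at hfin
  simp only [map_sub, coeff_C_mul]
  linear_combination hfin

lemma hstep_pos (g : PowerSeries k) (c : k) (hg0 : constantCoeff g = c) (N : ℕ)
    (j : ℕ) (a b : PowerSeries k)
    (ha : constantCoeff a = 1) (hb : constantCoeff b = 1)
    (h : ∀ i, i < j → coeff i a = coeff i b) :
    coeff j (g * a - C c * (a^N * (a + X * derivativeFun a)))
      - (-c * ((N:k) + (j:k))) * coeff j a =
    coeff j (g * b - C c * (b^N * (b + X * derivativeFun b)))
      - (-c * ((N:k) + (j:k))) * coeff j b := by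
  have hdvd : (X:PowerSeries k)^j ∣ (a - b) := by
    rw [X_pow_dvd_iff]; intro i hi; rw [map_sub, h i hi, sub_self]
  set G := ∑ i ∈ Finset.range (N+1), a^i * b^(N+1-1-i) with hG
  have hgeom : a^(N+1) - b^(N+1) = G * (a - b) := (geom_sum₂_mul a b (N+1)).symm
  have hG0 : constantCoeff G = (N:k)+1 := by
    rw [hG, map_sum]
    have : ∀ i ∈ Finset.range (N+1), constantCoeff (a^i * b^(N+1-1-i)) = 1 := by
      intro i _; rw [map_mul, map_pow, map_pow, ha, hb, one_pow, one_pow, one_mul]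
    rw [Finset.sum_congr rfl this, Finset.sum_const, Finset.card_range, nsmul_eq_mul, mul_one]
    push_cast; ring
  have hNp1 : ((N:k)+1) ≠ 0 := by
    have := Nat.cast_add_one_ne_zero (R := k) N; push_cast at this ⊢; exact this
  have hC1 : C (((N:k)+1)⁻¹) * C ((N:k)+1) = 1 := by
    rw [← map_mul, inv_mul_cancel₀ hNp1, map_one]
  have hinv : ((N:k)+1)⁻¹ * ((N:k)+1) = 1 := inv_mul_cancel₀ hNp1
  set δ := a^N * (a + X * derivativeFun a) - b^N * (b + X * derivativeFun b) with hδ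
  have hδ2 : δ = (a^(N+1) - b^(N+1))
      + C (((N:k)+1)⁻¹) * (X * derivativeFun (a^(N+1) - b^(N+1))) := by
    rw [hδ, deriv_sub, deriv_pow_succ a N, deriv_pow_succ b N]
    linear_combination (-(X * (a^N * derivativeFun a - b^N * derivativeFun b))) * hC1
  have hxicoeff : coeff j (a^(N+1) - b^(N+1)) = ((N:k)+1) * (coeff j a - coeff j b) := by
    rw [hgeom, coeff_mul_of_dvd _ _ _ hdvd, hG0, map_sub]
  have hXxi : coeff j (X * derivativeFun (a^(N+1) - b^(N+1)))
      = (j:k) * (((N:k)+1) * (coeff j a - coeff j b)) := by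
    rw [coeff_X_mul_deriv, hxicoeff]
  have hδj : coeff j δ = ((N:k)+1) * (coeff j a - coeff j b)
      + ((N:k)+1)⁻¹ * ((j:k) * (((N:k)+1) * (coeff j a - coeff j b))) := by
    rw [hδ2, map_add, coeff_C_mul, hxicoeff, hXxi]
  have hsplit : (g * a - C c * (a^N * (a + X * derivativeFun a)))
      - (g * b - C c * (b^N * (b + X * derivativeFun b)))
      = g * (a-b) - C c * δ := by
    rw [hδ]; ring
  have hgc : coeff j (g * (a-b)) = c * (coeff j a - coeff j b) := by
    rw [coeff_mul_of_dvd _ _ _ hdvd, hg0, map_sub]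
  have hfin := congrArg (coeff j) hsplit
  simp only [map_sub, coeff_C_mul] at hfin
  rw [hgc, hδj] at hfin
  simp only [map_sub, coeff_C_mul]
  linear_combination hfin - (c * (j:k) * (coeff j a - coeff j b)) * hinv

noncomputable def solveAux (D : PowerSeries k → PowerSeries k) (lam : ℕ → k) (j : ℕ) : k :=
  if j = 0 then 1
  else -(lam j)⁻¹ * coeff j (D (PowerSeries.mk fun i => if h : i < j then solveAux D lam i else 0))
termination_by j
decreasing_by exact h

lemma solve (D : PowerSeries k → PowerSeries k) (lam : ℕ → k)
    (h0 : ∀ a, constantCoeff a = 1 → coeff 0 (D a) = 0)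
    (hstep : ∀ j, 0 < j → ∀ a b : PowerSeries k, constantCoeff a = 1 → constantCoeff b = 1 →
      (∀ i, i < j → coeff i a = coeff i b) →
      coeff j (D a) - lam j * coeff j a = coeff j (D b) - lam j * coeff j b) :
    ∃ u : PowerSeries k, constantCoeff u = 1 ∧ coeff 0 (D u) = 0 ∧
      (∀ j, 0 < j → lam j ≠ 0 → coeff j (D u) = 0) := by
  set u : PowerSeries k := PowerSeries.mk (solveAux D lam) with hu
  have hc : ∀ i, coeff i u = solveAux D lam i := fun i => coeff_mk i _
  have hs0 : solveAux D lam 0 = 1 := by rw [solveAux]; simp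
  have hu0 : constantCoeff u = 1 := by
    rw [← coeff_zero_eq_constantCoeff_apply, hc, hs0]
  refine ⟨u, hu0, h0 u hu0, ?_⟩
  intro j hj hlam
  set b : PowerSeries k := PowerSeries.mk (fun i => if h : i < j then solveAux D lam i else 0)
    with hb
  have hb0 : constantCoeff b = 1 := by
    rw [← coeff_zero_eq_constantCoeff_apply, hb, coeff_mk, dif_pos hj, hs0]
  have heq : ∀ i, i < j → coeff i u = coeff i b := by
    intro i hi
    rw [hc, hb, coeff_mk, dif_pos hi]
  have hs := hstep j hj u b hu0 hb0 heq
  have huj : coeff j u = -(lam j)⁻¹ * coeff j (D b) := by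
    rw [hc, solveAux, if_neg (Nat.pos_iff_ne_zero.mp hj)]
  have hbj : coeff j b = 0 := by rw [hb, coeff_mk, dif_neg (lt_irrefl j)]
  have h2 : coeff j (D u) =
      coeff j (D b) + lam j * coeff j u - lam j * coeff j b := by
    linear_combination hs
  rw [h2, hbj, huj]
  field_simp
  ring

lemma derivFun_X : derivativeFun (X : PowerSeries k) = 1 := by
  ext j
  cases j with
  | zero => erw [coeff_derivative]; simp [coeff_one]
  | succ i => erw [coeff_derivative]; simp [coeff_one, coeff_X]

lemma ofPS_coeff_neg (x : PowerSeries k) (j : ℤ) (hj : j < 0) :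
    (HahnSeries.ofPowerSeries ℤ k x).coeff j = 0 := by
  rw [HahnSeries.ofPowerSeries_apply]
  apply HahnSeries.embDomain_notin_range
  rintro ⟨i, hi⟩
  simp at hi
  omega

lemma f_factor (f : LaurentSeries k) (n : ℤ) (hord : ∀ i < n, f.coeff i = 0) :
    f = HahnSeries.ofPowerSeries ℤ k (PowerSeries.mk fun i => f.coeff (n + i))
      * HahnSeries.single n 1 := by
  ext j
  have key : ((HahnSeries.ofPowerSeries ℤ k (PowerSeries.mk fun i => f.coeff (n + i)))
      * HahnSeries.single n (1:k)).coeff ((j - n) + n)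
      = (HahnSeries.ofPowerSeries ℤ k (PowerSeries.mk fun i => f.coeff (n + i))).coeff (j - n)
        := by
    rw [HahnSeries.coeff_mul_single_add, mul_one]
  have hjn : (j - n) + n = j := by ring
  rw [hjn] at key
  rw [key]
  rcases le_or_gt n j with h | h
  · obtain ⟨i, hi⟩ : ∃ i : ℕ, (i:ℤ) = j - n := ⟨(j-n).toNat, Int.toNat_of_nonneg (by omega)⟩
    rw [← hi, HahnSeries.ofPowerSeries_apply_coeff, coeff_mk]
    congr 1
    omega
  · rw [ofPS_coeff_neg _ _ (by omega), hord _ (by omega)]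

end GFC

open GFC

/-- binomial normal form for formal differentials of nonzero leading
order. If `f = Σ_{i ≥ n} a_i t^i` is a Laurent series with `a_n ≠ 0` and `n ≠ 0`,
then there are a formal coordinate `s` of order exactly one and a constant `c ≠ 0`
such that, with `r := a_0` the residue of `f·dt/t`,
`f(t)/t = (c·s(t)^n + r)·s'(t)/s(t)` holds in `k((t))`. -/
theorem good_formal_coordinate_exists
    {k : Type*} [Field k] [CharZero k] (n : ℤ) (hn : n ≠ 0)
    (f : LaurentSeries k) (hord : ∀ i < n, f.coeff i = 0) (hlead : f.coeff n ≠ 0) :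
    ∃ (s : PowerSeries k) (c : k), c ≠ 0 ∧
      constantCoeff s = 0 ∧ coeff 1 s ≠ 0 ∧
      f * (HahnSeries.ofPowerSeries ℤ k (X : PowerSeries k))⁻¹ =
        (HahnSeries.ofPowerSeries ℤ k (PowerSeries.C c) *
            (HahnSeries.ofPowerSeries ℤ k s) ^ n +
          HahnSeries.ofPowerSeries ℤ k (PowerSeries.C (f.coeff 0))) *
          HahnSeries.ofPowerSeries ℤ k s.derivativeFun *
          (HahnSeries.ofPowerSeries ℤ k s)⁻¹ := by
  classical
  set φ := HahnSeries.ofPowerSeries ℤ k with hφ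
  set g : PowerSeries k := PowerSeries.mk (fun i => f.coeff (n + i)) with hgdef
  have hg0 : constantCoeff g = f.coeff n := by
    rw [← coeff_zero_eq_constantCoeff_apply, hgdef, coeff_mk]
    norm_num
  set c := f.coeff n with hcdef
  have hc0 : c ≠ 0 := hlead
  have hfac := f_factor f n hord
  have hT0 : φ (X : PowerSeries k) ≠ 0 := by
    intro h
    have := HahnSeries.ofPowerSeries_injective (h.trans (map_zero φ).symm)
    exact X_ne_zero this
  rcases hn.lt_or_gt with hneg | hpos
  · -- n < 0
    set m : ℕ := (-n).toNat with hmdef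
    have hm1 : 0 < m := by omega
    have hnm : n = -(m:ℤ) := by omega
    set r := f.coeff 0 with hrdef
    have hgm : coeff m g = r := by
      rw [hgdef, coeff_mk, hrdef]
      congr 1
      omega
    obtain ⟨u, hu0, hD0, hDj⟩ := solve
      (fun x => g * x^(m+1) - (C c + C r * X^m * x^m) * (x + X * derivativeFun x))
      (fun j => c * ((m:k) - (j:k)))
      (by
        intro a ha
        simp only [map_sub, coeff_zero_eq_constantCoeff_apply, map_mul, map_add, map_pow,
          constantCoeff_X, constantCoeff_C, ha, one_pow, mul_one, zero_mul, mul_zero, add_zero,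
          zero_pow (Nat.pos_iff_ne_zero.mp hm1), hg0]
        ring)
      (by
        intro j hj a b ha hb h
        exact hstep_neg g c r hg0 m hm1 j a b ha hb h)
    have hlamne : ∀ i : ℕ, i ≠ m → c * ((m:k) - (i:k)) ≠ 0 := by
      intro i hi
      refine mul_ne_zero hc0 (sub_ne_zero.mpr ?_)
      exact fun hh => hi (Nat.cast_injective hh.symm)
    have hu0' : constantCoeff u = 1 := hu0
    have hdvd : (X:PowerSeries k)^m ∣
        (g * u^(m+1) - (C c + C r * X^m * u^m) * (u + X * derivativeFun u)) := by
      rw [X_pow_dvd_iff]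
      intro i hi
      rcases Nat.eq_zero_or_pos i with rfl | hi0
      · exact hD0
      · exact hDj i hi0 (hlamne i (by omega))
    have hDu : g * u^(m+1) - (C c + C r * X^m * u^m) * (u + X * derivativeFun u) = 0 := by
      ext j
      rw [map_zero]
      rcases Nat.eq_zero_or_pos j with rfl | hj0
      · exact hD0
      · rcases eq_or_ne j m with hjm | hjm
        · rw [hjm]
          exact resonant_coeff_zero g u c r m hm1 hu0' hgm hdvd
        · exact hDj j hj0 (hlamne j hjm)
    have hP : g * u^(m+1) = (C c + C r * X^m * u^m) * (u + X * derivativeFun u) :=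
      sub_eq_zero.mp hDu
    refine ⟨X * u, c, hc0, ?_, ?_, ?_⟩
    · rw [map_mul, constantCoeff_X, zero_mul]
    · rw [show (1:ℕ) = 0 + 1 from rfl, coeff_succ_X_mul, coeff_zero_eq_constantCoeff_apply, hu0']
      exact one_ne_zero
    · have hsd : derivativeFun ((X:PowerSeries k) * u) = u + X * derivativeFun u := by
        rw [derivativeFun_mul, derivFun_X, smul_eq_mul, smul_eq_mul, mul_one]
        ring
      have hU0 : φ u ≠ 0 := by
        intro h
        have hu00 : u = 0 := HahnSeries.ofPowerSeries_injective (h.trans (map_zero φ).symm)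
        rw [hu00, map_zero] at hu0'
        exact one_ne_zero hu0'.symm
      have hPL := congrArg φ hP
      simp only [map_mul, map_add, map_pow] at hPL
      have h1 : (φ X)^m * HahnSeries.single n (1:k) = 1 := by
        rw [← map_pow, hφ, HahnSeries.ofPowerSeries_X_pow, HahnSeries.single_mul_single, mul_one]
        rw [show (m:ℤ) + n = 0 by omega, HahnSeries.single_zero_one]
      have hsingleInv : HahnSeries.single n (1:k) = ((φ X)^m)⁻¹ :=
        eq_inv_of_mul_eq_one_left (by rw [mul_comm] at h1; exact h1)
      rw [← hgdef, ← hφ] at hfac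
      rw [hfac, hsd]
      simp only [map_mul, map_add]
      rw [hsingleInv, hnm, zpow_neg, zpow_natCast, mul_pow]
      field_simp
      linear_combination hPL
  · -- n > 0
    set N : ℕ := n.toNat with hNdef
    have hN1 : 0 < N := by omega
    have hnN : n = (N:ℤ) := by omega
    have hr0 : f.coeff 0 = 0 := hord 0 hpos
    obtain ⟨u, hu0, hD0, hDj⟩ := solve
      (fun x => g * x - C c * (x^N * (x + X * derivativeFun x)))
      (fun j => -c * ((N:k) + (j:k)))
      (by
        intro a ha
        simp only [map_sub, coeff_zero_eq_constantCoeff_apply, map_mul, map_add, map_pow,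
          constantCoeff_X, constantCoeff_C, ha, one_pow, mul_one, zero_mul, mul_zero, add_zero,
          hg0]
        ring)
      (by
        intro j hj a b ha hb h
        exact hstep_pos g c hg0 N j a b ha hb h)
    have hu0' : constantCoeff u = 1 := hu0
    have hDu : g * u - C c * (u^N * (u + X * derivativeFun u)) = 0 := by
      ext j
      rw [map_zero]
      rcases Nat.eq_zero_or_pos j with rfl | hj0
      · exact hD0
      · refine hDj j hj0 (mul_ne_zero (neg_ne_zero.mpr hc0) ?_)
        have hcast : ((N:k) + (j:k)) = ((N + j : ℕ) : k) := by push_cast; ring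
        rw [hcast]
        exact Nat.cast_ne_zero.mpr (by omega)
    have hP : g * u = C c * (u^N * (u + X * derivativeFun u)) := sub_eq_zero.mp hDu
    refine ⟨X * u, c, hc0, ?_, ?_, ?_⟩
    · rw [map_mul, constantCoeff_X, zero_mul]
    · rw [show (1:ℕ) = 0 + 1 from rfl, coeff_succ_X_mul, coeff_zero_eq_constantCoeff_apply, hu0']
      exact one_ne_zero
    · have hsd : derivativeFun ((X:PowerSeries k) * u) = u + X * derivativeFun u := by
        rw [derivativeFun_mul, derivFun_X, smul_eq_mul, smul_eq_mul, mul_one]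
        ring
      have hU0 : φ u ≠ 0 := by
        intro h
        have hu00 : u = 0 := HahnSeries.ofPowerSeries_injective (h.trans (map_zero φ).symm)
        rw [hu00, map_zero] at hu0'
        exact one_ne_zero hu0'.symm
      have hPL := congrArg φ hP
      simp only [map_mul, map_add, map_pow] at hPL
      have hsingleN : HahnSeries.single n (1:k) = (φ X)^N := by
        rw [← map_pow, hφ, HahnSeries.ofPowerSeries_X_pow, hnN]
      rw [← hgdef, ← hφ] at hfac
      rw [hr0, hfac, hsd]
      simp only [map_mul, map_add, map_zero, add_zero]
      rw [hsingleN, hnN, zpow_natCast]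
      field_simp
      linear_combination (φ X)^N * hPL
end

section
/- Let k be a field, l ≥ 2 an integer with l!·1_k ≠ 0 (e.g., char k = 0), and c, e, r ∈ k with c ≠ 0. Suppose t = Σ_{i≥1} a_i s^i ∈ k[[s]] with a_1 ≠ 0 satisfies the differential equation (c + r·t^l)·(dt/ds) = (t/s)^{l+1}·(e + r·s^l) in k[[s]] (where t/s := Σ_{i≥1} a_i s^{i-1}). Then c = e·a_1^l and a_k = 0 for all 2 ≤ k ≤ l. -/
/-!
Write `t = X * v`, so `v(0) = a₁`, and the `t ^ l` and `X ^ l` terms of the equation only start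
in degree `l`; below degree `l` the equation reads `c * t' = e * v ^ (l + 1)` coefficientwise.
Degree `0` gives `c * a₁ = e * a₁ ^ (l + 1)`. If `a₂ = ⋯ = a_n = 0` with `n < l`, then
`v = a₁ + a_{n+1} X ^ n + O(X ^ (n + 1))`, and degree `n` gives
`c (n + 1) a_{n+1} = e (l + 1) a₁ ^ l a_{n+1} = c (l + 1) a_{n+1}`;
as `l - n` divides `l !`, this forces `a_{n+1} = 0`.
-/

open PowerSeries

theorem natCast_ne_zero_of_factorial_ne_zero {R : Type*} [Semiring R] {l m : ℕ}
    (hfac : (l.factorial : R) ≠ 0) (hm : 0 < m) (hml : m ≤ l) : (m : R) ≠ 0 := by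
  intro hm0
  obtain ⟨d, hd⟩ := Nat.dvd_factorial hm hml
  exact hfac (by rw [hd, Nat.cast_mul, hm0, zero_mul])

namespace PowerSeries

section Gap

variable {R : Type*} [CommSemiring R] {n : ℕ}

theorem coeff_mul_of_coeff_eq_zero_of_lt {f g : R⟦X⟧}
    (hf : ∀ i, 0 < i → i < n → coeff i f = 0)
    {i : ℕ} (hi : 0 < i) (hin : i ≤ n) :
    coeff i (f * g) = constantCoeff f * coeff i g + coeff i f * constantCoeff g := by
  rw [coeff_mul, Finset.sum_eq_add (0, i) (i, 0) (by simp [hi.ne])]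
  · simp only [coeff_zero_eq_constantCoeff_apply]
  · rintro ⟨p, q⟩ hpq ⟨hp, hq⟩
    rw [Finset.HasAntidiagonal.mem_antidiagonal] at hpq
    simp only [ne_eq, Prod.mk.injEq, not_and] at hp hq
    rw [hf p (by omega) (by omega), zero_mul]
  · simp
  · simp

theorem coeff_pow_succ_of_coeff_eq_zero_of_lt {v : R⟦X⟧}
    (hv : ∀ i, 0 < i → i < n → coeff i v = 0) (m : ℕ) {i : ℕ} (hi : 0 < i) (hin : i ≤ n) :
    coeff i (v ^ (m + 1)) = (m + 1) * constantCoeff v ^ m * coeff i v := by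
  induction m generalizing i with
  | zero => simp
  | succ m ih =>
    have hvm : ∀ j, 0 < j → j < n → coeff j (v ^ (m + 1)) = 0 := fun j hj hjn => by
      rw [ih hj hjn.le, hv j hj hjn, mul_zero]
    rw [pow_succ, coeff_mul_of_coeff_eq_zero_of_lt hvm hi hin, ih hi hin, map_pow]
    push_cast
    ring

end Gap

section GoodCoordinate

set_option linter.deprecated false

variable {R : Type*} [CommRing R] {l : ℕ} {c e r : R} {t v : R⟦X⟧}

theorem mul_coeff_derivativeFun_eq_of_lt (htv : t = X * v)
    (heq : (C c + C r * t ^ l) * t.derivativeFun = v ^ (l + 1) * (C e + C r * X ^ l))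
    {n : ℕ} (hn : n < l) :
    c * (coeff (n + 1) t * (n + 1)) = e * coeff n (v ^ (l + 1)) := by
  have htl : t ^ l = X ^ l * v ^ l := by rw [htv, mul_pow]
  have hlhs : (C c + C r * t ^ l) * t.derivativeFun =
      C c * t.derivativeFun + X ^ l * (C r * v ^ l * t.derivativeFun) := by
    rw [htl]; ring
  have hrhs : v ^ (l + 1) * (C e + C r * X ^ l) =
      C e * v ^ (l + 1) + X ^ l * (C r * v ^ (l + 1)) := by
    ring
  have hderiv : coeff n t.derivativeFun = coeff (n + 1) t * (n + 1) := coeff_derivative t n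
  have hcoeff := congrArg (coeff n) heq
  rw [hlhs, hrhs] at hcoeff
  simpa [coeff_X_pow_mul', hn.not_ge, hderiv] using hcoeff

theorem mul_coeff_one_eq_of_pos (htv : t = X * v)
    (heq : (C c + C r * t ^ l) * t.derivativeFun = v ^ (l + 1) * (C e + C r * X ^ l))
    (hl : 0 < l) : c * coeff 1 t = e * coeff 1 t ^ (l + 1) := by
  have hv0 : coeff 0 v = coeff 1 t := by rw [htv]; exact (coeff_succ_X_mul 0 v).symm
  have h0 := mul_coeff_derivativeFun_eq_of_lt htv heq hl
  rw [coeff_zero_eq_constantCoeff_apply, map_pow, ← coeff_zero_eq_constantCoeff_apply, hv0] at h0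
  simpa using h0

theorem mul_sub_mul_coeff_succ_eq_zero (htv : t = X * v)
    (heq : (C c + C r * t ^ l) * t.derivativeFun = v ^ (l + 1) * (C e + C r * X ^ l))
    (hce : c = e * coeff 1 t ^ l) {n : ℕ} (hn : 0 < n) (hnl : n < l)
    (hgap : ∀ j, 2 ≤ j → j ≤ n → coeff j t = 0) :
    c * ((l : R) - n) * coeff (n + 1) t = 0 := by
  have hcoeff_v : ∀ i, coeff i v = coeff (i + 1) t := fun i => by rw [htv, coeff_succ_X_mul]
  have hgap_v : ∀ i, 0 < i → i < n → coeff i v = 0 := fun i hi hin => by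
    rw [hcoeff_v]; exact hgap (i + 1) (by omega) (by omega)
  have h := mul_coeff_derivativeFun_eq_of_lt htv heq hnl
  rw [coeff_pow_succ_of_coeff_eq_zero_of_lt hgap_v l hn le_rfl, hcoeff_v,
    ← coeff_zero_eq_constantCoeff_apply, hcoeff_v, zero_add] at h
  linear_combination ((l : R) + 1) * coeff (n + 1) t * hce - h

end GoodCoordinate

end PowerSeries

theorem good_coordinate_coeff_vanishing_general
    {k : Type*} [Field k] (l : ℕ) (hl : 2 ≤ l) (hfac : (Nat.factorial l : k) ≠ 0)
    (c e r : k) (hc : c ≠ 0)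
    (t v : PowerSeries k)
    (ha1 : coeff 1 t ≠ 0) (htv : t = X * v)
    (heq : (PowerSeries.C c + PowerSeries.C r * t ^ l) * t.derivativeFun =
      v ^ (l + 1) * (PowerSeries.C e + PowerSeries.C r * X ^ l)) :
    c = e * (coeff 1 t) ^ l ∧ ∀ j : ℕ, 2 ≤ j → j ≤ l → coeff j t = 0 := by
  have hce : c = e * coeff 1 t ^ l := by
    apply mul_right_cancel₀ ha1
    rw [mul_coeff_one_eq_of_pos htv heq (by omega)]
    ring
  refine ⟨hce, fun j => ?_⟩
  induction j using Nat.strong_induction_on with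
  | _ j ih =>
    intro h2j hjl
    obtain ⟨n, rfl⟩ : ∃ n, j = n + 1 := ⟨j - 1, by omega⟩
    have hln : ((l - n : ℕ) : k) ≠ 0 :=
      natCast_ne_zero_of_factorial_ne_zero hfac (by omega) (by omega)
    have h := mul_sub_mul_coeff_succ_eq_zero htv heq hce (n := n) (by omega) (by omega)
      fun i h2i hin => ih i (by omega) h2i (by omega)
    rw [← Nat.cast_sub (by omega)] at h
    simpa [hc, hln] using h

/-- key coefficient computation for good formal coordinates of negative
log-order. If `t = Σ_{i≥1} a_i s^i` (written `t = X·v`) with `a_1 ≠ 0` satisfies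
`(c + r·t^l)·(dt/ds) = (t/s)^{l+1}·(e + r·s^l)` and `l ≥ 2` with `l!` invertible in
`k`, `c ≠ 0`, then `c = e·a_1^l` and `a_j = 0` for all `2 ≤ j ≤ l`. -/
theorem good_coordinate_coeff_vanishing
    {k : Type*} [Field k] (l : ℕ) (hl : 2 ≤ l) (hfac : (Nat.factorial l : k) ≠ 0)
    (c e r : k) (hc : c ≠ 0)
    (t v : PowerSeries k) (ht0 : constantCoeff t = 0)
    (ha1 : coeff 1 t ≠ 0) (htv : t = X * v)
    (heq : (PowerSeries.C c + PowerSeries.C r * t ^ l) * t.derivativeFun =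
      v ^ (l + 1) * (PowerSeries.C e + PowerSeries.C r * X ^ l)) :
    c = e * (coeff 1 t) ^ l ∧ ∀ j : ℕ, 2 ≤ j → j ≤ l → coeff j t = 0 :=
  good_coordinate_coeff_vanishing_general l hl hfac c e r hc t v ha1 htv heq
end

section
/- Let k be a field of characteristic zero, l ≥ 1 an integer, and c, e, r ∈ k with c ≠ 0, c = e·a_1^l. Suppose t = Σ_{i≥1} a_i s^i and t̄ = Σ_{i≥1} ā_i s^i in k[[s]] both satisfy (c + r·u^l)·(du/ds) = (u/s)^{l+1}·(e + r·s^l) (with u = t resp. t̄), and suppose a_1 = ā_1 and a_{l+1} = ā_{l+1}. Then t = t̄. In other words, a good formal coordinate solving this equation is uniquely determined by its coefficients in degrees 1 and l+1. -/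
/-!
Suppose `s^(n+1)` divides `t - t̄` and let `d := coeff (n+1) (t - t̄)`. Subtracting the two
equations and reading off the coefficient of `s^n`, the terms nonlinear in `t - t̄` vanish, and so
do those carrying `r`, which contain `t^l` or `s^l` with `l ≥ 1`: only `c (n+1) d` and
`(l+1) e a₁^l d = (l+1) c d` survive. Hence `c (n - l) d = 0`, so `d = 0` for `n ≠ l`, while for
`n = l` the coefficient is prescribed; induction on `n` gives `t = t̄`.
-/

open PowerSeries

namespace PowerSeries

variable {R : Type*} [CommRing R]

theorem coeff_mul_of_X_pow_dvd {n : ℕ} {f : R⟦X⟧} (hf : X ^ n ∣ f) (g : R⟦X⟧) :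
    coeff n (g * f) = constantCoeff g * coeff n f := by
  obtain ⟨h, rfl⟩ := hf
  rw [mul_left_comm, coeff_X_pow_mul', coeff_X_pow_mul']
  simp

theorem coeff_mul_eq_zero_of_X_pow_succ_dvd {n : ℕ} {f : R⟦X⟧} (hf : X ^ (n + 1) ∣ f)
    (g : R⟦X⟧) : coeff n (f * g) = 0 :=
  X_pow_dvd_iff.mp (hf.mul_right g) n n.lt_succ_self

theorem X_pow_dvd_derivative_sub {n : ℕ} {f g : R⟦X⟧} (h : X ^ (n + 1) ∣ f - g) :
    X ^ n ∣ d⁄dX R f - d⁄dX R g := by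
  rw [← map_sub]
  refine X_pow_dvd_iff.mpr fun m hm => ?_
  rw [coeff_derivative, X_pow_dvd_iff.mp h (m + 1) (by omega), zero_mul]

theorem coeff_pow_succ_sub_pow_succ {n : ℕ} {f g : R⟦X⟧} (h : X ^ n ∣ f - g)
    (hfg : constantCoeff g = constantCoeff f) (p : ℕ) :
    coeff n (f ^ (p + 1) - g ^ (p + 1)) = (p + 1) * constantCoeff f ^ p * coeff n (f - g) := by
  rw [← geom_sum₂_mul, coeff_mul_of_X_pow_dvd h, map_sum]
  have hterm : ∀ i ∈ Finset.range (p + 1),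
      constantCoeff (f ^ i * g ^ (p + 1 - 1 - i)) = constantCoeff f ^ p := fun i hi => by
    rw [map_mul, map_pow, map_pow, hfg, ← pow_add]
    congr 1
    have := Finset.mem_range.mp hi
    omega
  rw [Finset.sum_congr rfl hterm, Finset.sum_const, Finset.card_range, nsmul_eq_mul]
  push_cast
  ring

theorem coeff_C_add_C_mul_pow_mul_derivative_sub {l n : ℕ} (hl : 1 ≤ l) (c r : R)
    {t tbar : R⟦X⟧} (ht0 : constantCoeff t = 0) (h : X ^ (n + 1) ∣ t - tbar) :
    coeff n ((C c + C r * t ^ l) * d⁄dX R t - (C c + C r * tbar ^ l) * d⁄dX R tbar)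
      = c * (n + 1) * coeff (n + 1) (t - tbar) := by
  have hsplit : (C c + C r * t ^ l) * d⁄dX R t - (C c + C r * tbar ^ l) * d⁄dX R tbar
      = (C c + C r * t ^ l) * (d⁄dX R t - d⁄dX R tbar)
        + (t ^ l - tbar ^ l) * (C r * d⁄dX R tbar) := by
    ring
  have hpow : X ^ (n + 1) ∣ t ^ l - tbar ^ l := h.trans (sub_dvd_pow_sub_pow t tbar l)
  rw [hsplit, map_add, coeff_mul_of_X_pow_dvd (X_pow_dvd_derivative_sub h),
    coeff_mul_eq_zero_of_X_pow_succ_dvd hpow, ← map_sub, coeff_derivative]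
  simp [ht0, zero_pow (Nat.one_le_iff_ne_zero.mp hl)]
  ring

theorem coeff_pow_succ_mul_sub_pow_succ_mul {l n : ℕ} (hl : 1 ≤ l) (e r : R) {v vbar : R⟦X⟧}
    (h : X ^ n ∣ v - vbar) (hv : constantCoeff vbar = constantCoeff v) :
    coeff n (v ^ (l + 1) * (C e + C r * X ^ l) - vbar ^ (l + 1) * (C e + C r * X ^ l))
      = (l + 1) * (e * constantCoeff v ^ l) * coeff n (v - vbar) := by
  rw [← sub_mul, mul_comm, coeff_mul_of_X_pow_dvd (h.trans (sub_dvd_pow_sub_pow v vbar _)),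
    coeff_pow_succ_sub_pow_succ h hv]
  simp [zero_pow (Nat.one_le_iff_ne_zero.mp hl)]
  ring

theorem mul_coeff_succ_sub_eq_of_X_pow_succ_dvd {l n : ℕ} (hl : 1 ≤ l) {c e r : R}
    {t tbar v vbar : R⟦X⟧} (ht0 : constantCoeff t = 0)
    (htv : t = X * v) (htbarv : tbar = X * vbar)
    (hv : constantCoeff vbar = constantCoeff v)
    (heq : (C c + C r * t ^ l) * d⁄dX R t = v ^ (l + 1) * (C e + C r * X ^ l))
    (heqbar : (C c + C r * tbar ^ l) * d⁄dX R tbar = vbar ^ (l + 1) * (C e + C r * X ^ l))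
    (hn : X ^ (n + 1) ∣ t - tbar) :
    c * (n + 1) * coeff (n + 1) (t - tbar)
      = (l + 1) * (e * constantCoeff v ^ l) * coeff (n + 1) (t - tbar) := by
  have hdiff : t - tbar = X * (v - vbar) := by rw [htv, htbarv, mul_sub]
  have hvn : X ^ n ∣ v - vbar := X_pow_dvd_iff.mpr fun m hm => by
    rw [← coeff_succ_X_mul, ← hdiff]
    exact X_pow_dvd_iff.mp hn (m + 1) (by omega)
  calc c * (n + 1) * coeff (n + 1) (t - tbar)
      = coeff n ((C c + C r * t ^ l) * d⁄dX R t - (C c + C r * tbar ^ l) * d⁄dX R tbar) :=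
        (coeff_C_add_C_mul_pow_mul_derivative_sub hl c r ht0 hn).symm
    _ = coeff n (v ^ (l + 1) * (C e + C r * X ^ l) - vbar ^ (l + 1) * (C e + C r * X ^ l)) := by
        rw [heq, heqbar]
    _ = (l + 1) * (e * constantCoeff v ^ l) * coeff (n + 1) (t - tbar) := by
        rw [coeff_pow_succ_mul_sub_pow_succ_mul hl e r hvn hv, hdiff, coeff_succ_X_mul]

end PowerSeries

/-- uniqueness of good formal coordinates for negative log-order. Two
solutions `t = Σ_{i≥1} a_i s^i` and `t̄ = Σ_{i≥1} ā_i s^i` of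
`(c + r·u^l)·(du/ds) = (u/s)^{l+1}·(e + r·s^l)` having the same coefficients in
degrees `1` and `l+1` coincide. -/
theorem good_coordinate_unique
    {k : Type*} [Field k] [CharZero k] (l : ℕ) (hl : 1 ≤ l)
    (c e r : k) (hc : c ≠ 0)
    (t tbar v vbar : PowerSeries k)
    (ht0 : constantCoeff t = 0) (htbar0 : constantCoeff tbar = 0)
    (hce : c = e * (coeff 1 t) ^ l)
    (htv : t = X * v) (htbarv : tbar = X * vbar)
    (heq : (PowerSeries.C c + PowerSeries.C r * t ^ l) * t.derivativeFun =
      v ^ (l + 1) * (PowerSeries.C e + PowerSeries.C r * X ^ l))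
    (heqbar : (PowerSeries.C c + PowerSeries.C r * tbar ^ l) * tbar.derivativeFun =
      vbar ^ (l + 1) * (PowerSeries.C e + PowerSeries.C r * X ^ l))
    (h1 : coeff 1 t = coeff 1 tbar)
    (hl1 : coeff (l + 1) t = coeff (l + 1) tbar) :
    t = tbar := by
  have hv0 : constantCoeff v = coeff 1 t := by simp [htv]
  have hvbar0 : constantCoeff vbar = constantCoeff v := by simp [hv0, h1, htbarv]
  have hstep : ∀ n, X ^ (n + 1) ∣ t - tbar → coeff (n + 1) t = coeff (n + 1) tbar := by
    intro n hn
    rcases eq_or_ne n l with rfl | hnl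
    · exact hl1
    have key := mul_coeff_succ_sub_eq_of_X_pow_succ_dvd hl ht0 htv htbarv hvbar0 heq heqbar hn
    rw [hv0, ← hce] at key
    have hnl_cast : (n : k) - l ≠ 0 := sub_ne_zero.mpr (Nat.cast_injective.ne hnl)
    have hzero : c * (n - l) * coeff (n + 1) (t - tbar) = 0 := by linear_combination key
    rw [← sub_eq_zero, ← map_sub]
    simpa [hc, hnl_cast] using hzero
  ext n
  induction n using Nat.strong_induction_on with
  | _ n ih =>
    rcases n with _ | n
    · simp [ht0, htbar0]
    · refine hstep n (X_pow_dvd_iff.mpr fun m hm => ?_)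
      rw [map_sub, ih m hm, sub_self]
end
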